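/- arXiv:math/0607732 — 5 statements merged into one kernel-verified Lean document; each statement's English description precedes it below -/
import Mathlib

section
/- Let V be a finite-dimensional complex vector space and let j : V → V be a conjugate-linear map satisfying j ∘ j = -id_V. Then the complex dimension of V is even. -/
open scoped Quaternion

/-- If a finite-dimensional complex vector space `V` admits a conjugate-linear map
`j` with `j ∘ j = -id_V`, then the complex dimension of `V` is even. -/
theorem even_finrank_of_conj_linear_neg_one
    (V : Type*) [AddCommGroup V] [Module ℂ V] [FiniteDimensional ℂ V]
    (j : V → V)
    (hadd : ∀ v w : V, j (v + w) = j v + j w)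
    (hsmul : ∀ (z : ℂ) (v : V), j (z • v) = (starRingEnd ℂ) z • j v)
    (hjj : ∀ v : V, j (j v) = -v) :
    Even (Module.finrank ℂ V) := by
  have hj0 : j 0 = 0 := by
    have h := hadd 0 0
    simp only [add_zero] at h
    exact (left_eq_add.mp h)
  -- the quaternion action: (a + bi + cj + dk) • v = (a+bi)•v + (c+di)•(j v)
  letI : SMul ℍ[ℝ] V :=
    ⟨fun q v => ((q.re : ℂ) + q.imI * Complex.I) • v
        + ((q.imJ : ℂ) + q.imK * Complex.I) • j v⟩
  have hsmul_def : ∀ (q : ℍ[ℝ]) (v : V),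
      q • v = ((q.re : ℂ) + q.imI * Complex.I) • v
        + ((q.imJ : ℂ) + q.imK * Complex.I) • j v := fun _ _ => rfl
  have hconj : ∀ a b : ℝ, (starRingEnd ℂ) ((a : ℂ) + b * Complex.I)
      = (a : ℂ) - b * Complex.I := by
    intro a b
    simp [map_add, map_mul, Complex.conj_ofReal, Complex.conj_I]
    ring
  letI : Module ℍ[ℝ] V :=
    { one_smul := by intro v; simp [hsmul_def, hj0]
      mul_smul := by
        intro q p v
        simp only [hsmul_def, hadd, hsmul, smul_add, smul_smul, hconj, hjj,
          Quaternion.re_mul, Quaternion.imI_mul, Quaternion.imJ_mul, Quaternion.imK_mul,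
          smul_neg]
        push_cast
        match_scalars <;> (ring_nf; simp only [Complex.I_sq]; ring)
      smul_zero := by intro q; simp [hsmul_def, hj0]
      smul_add := by
        intro q v w
        simp only [hsmul_def, hadd, smul_add]
        abel
      add_smul := by
        intro q p v
        simp only [hsmul_def, Quaternion.re_add, Quaternion.imI_add, Quaternion.imJ_add,
          Quaternion.imK_add]
        push_cast
        match_scalars <;> ring
      zero_smul := by intro v; simp [hsmul_def] }
  haveI : IsScalarTower ℝ ℍ[ℝ] V := by
    constructor
    intro r q v
    show _ = (r : ℂ) • (q • v)
    simp only [hsmul_def, Quaternion.re_smul, Quaternion.imI_smul, Quaternion.imJ_smul,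
      Quaternion.imK_smul, smul_eq_mul, smul_add, smul_smul]
    push_cast
    match_scalars <;> ring
  haveI : FiniteDimensional ℝ V := Module.Finite.trans ℂ V
  haveI : FiniteDimensional ℍ[ℝ] V := FiniteDimensional.right ℝ ℍ[ℝ] V
  have h1 : Module.finrank ℝ ℍ[ℝ] * Module.finrank ℍ[ℝ] V = Module.finrank ℝ V :=
    Module.finrank_mul_finrank ℝ ℍ[ℝ] V
  have h2 : Module.finrank ℝ ℂ * Module.finrank ℂ V = Module.finrank ℝ V :=
    Module.finrank_mul_finrank ℝ ℂ V
  rw [Quaternion.finrank_eq_four] at h1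
  rw [Complex.finrank_real_complex] at h2
  refine ⟨Module.finrank ℍ[ℝ] V, ?_⟩
  omega
end

section
/- Fix g ≥ 1. Let K be the g×g matrix over ℤ with entries 1 on the anti-diagonal and 0 elsewhere, let I be the g×g identity matrix, and define the 2g×2g block matrices C = [[-I, I+K],[-K, K]] and S = [[0, K],[K, 0]] (the 2g×2g anti-diagonal matrix K_{2g}). Then S · C = C · [[I, -2I-K],[0, -I]]. -/
/-- With `K` the `g×g` anti-diagonal matrix of `1`'s, `C = [[-I, I+K],[-K, K]]`
and `S = [[0, K],[K, 0]]` (the `2g×2g` anti-diagonal matrix), one has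
`S · C = C · [[I, -2I-K],[0, -I]]`. -/
theorem conjugated_action_even_genus (g : ℕ) (hg : 1 ≤ g)
    (K : Matrix (Fin g) (Fin g) ℤ)
    (hK : ∀ i j : Fin g, K i j = if (i : ℕ) + (j : ℕ) = g - 1 then 1 else 0)
    (C S : Matrix (Fin g ⊕ Fin g) (Fin g ⊕ Fin g) ℤ)
    (hC : C = Matrix.fromBlocks (-1) (1 + K) (-K) K)
    (hS : S = Matrix.fromBlocks 0 K K 0) :
    S * C = C * Matrix.fromBlocks 1 (-2 - K) 0 (-1) := by
  have hKK : K * K = 1 := by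
    ext i j
    have hi := i.isLt
    have hj := j.isLt
    set k0 : Fin g := ⟨g - 1 - i, by omega⟩ with hk0
    have key : ∀ k : Fin g,
        K i k * K k j = if k = k0 then (if i = j then (1:ℤ) else 0) else 0 := by
      intro k
      have hk := k.isLt
      have hfin : (k = k0) ↔ ((k:ℕ) = g - 1 - i) := by
        rw [Fin.ext_iff]
      have hfin2 : (i = j) ↔ ((i:ℕ) = (j:ℕ)) := by rw [Fin.ext_iff]
      rw [hK, hK]
      split_ifs with h1 h2 h3 h4 h5 <;>
        simp_all <;> omega
    rw [Matrix.mul_apply,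
      Finset.sum_congr rfl (fun k _ => key k), Finset.sum_ite_eq'
      Finset.univ k0 (fun _ => if i = j then (1:ℤ) else 0)]
    simp [Matrix.one_apply]
  subst hC hS
  rw [Matrix.fromBlocks_multiply, Matrix.fromBlocks_multiply]
  rw [show ((-1 : Matrix (Fin g) (Fin g) ℤ) * (-2 - K) + (1 + K) * (-1)) = 1 by
        noncomm_ring,
      show ((-K) * (-2 - K) + K * (-1)) = K * K + K by noncomm_ring,
      show ((0 : Matrix (Fin g) (Fin g) ℤ) * (-1) + K * (-K)) = -(K * K) by
        noncomm_ring,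
      show (K * (1 + K) + 0 * K) = K * K + K by noncomm_ring,
      hKK]
  simp
end

section
/- Fix g ≥ 2 and set h = g - 1. Let K be the h×h matrix over ℤ with 1's on the anti-diagonal and 0 elsewhere, and I the h×h identity. With respect to the block decomposition of size (1, h, 1, h), define S = [[1,0,0,0],[0,0,0,K],[0,0,-1,0],[0,K,0,0]], C = [[1,0,0,0],[0,-I,0,I+K],[0,0,1,0],[0,-K,0,K]], the intersection matrix J = [[0,0,-1,0],[0,0,0,-I],[1,0,0,0],[0,I,0,0]], and T = [[1,0,0,0],[0,I,0,-2I-K],[0,0,-1,0],[0,0,0,-I]]. Then Cᵀ · J · C = J and S · C = C · T. -/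
lemma antidiag_sq (h : ℕ)
    (K : Matrix (Fin h) (Fin h) ℤ)
    (hK : ∀ i j : Fin h, K i j = if (i : ℕ) + (j : ℕ) = h - 1 then 1 else 0) :
    K * K = 1 := by
  ext i j
  rw [Matrix.mul_apply]
  rw [Finset.sum_eq_single i.rev]
  · have h1 : (i : ℕ) + (i.rev : ℕ) = h - 1 := by
      simp [Fin.val_rev]; omega
    rw [hK, hK, if_pos h1]
    have : ((i.rev : ℕ) + (j : ℕ) = h - 1) ↔ i = j := by
      simp [Fin.val_rev]; omega
    simp only [one_mul, Matrix.one_apply, this]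
  · intro b _ hb
    rw [hK]
    have : ¬ ((i:ℕ) + (b:ℕ) = h - 1) := by
      intro hc; apply hb; ext; simp [Fin.val_rev]; omega
    simp [this]
  · simp

/-- Odd genus case: with blocks of sizes `(1, h, 1, h)` where `h = g - 1`,
`K` the `h×h` anti-diagonal matrix of `1`'s, the change-of-basis matrix
`C = [[1,0,0,0],[0,-I,0,I+K],[0,0,1,0],[0,-K,0,K]]` is symplectic
(`Cᵀ·J·C = J` for the intersection matrix `J`) and conjugates the homology
action `S = [[1,0,0,0],[0,0,0,K],[0,0,-1,0],[0,K,0,0]]` into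
`T = [[1,0,0,0],[0,I,0,-2I-K],[0,0,-1,0],[0,0,0,-I]]`, i.e. `S·C = C·T`. -/
theorem symplectic_and_conjugation_odd_genus (g h : ℕ) (hg : 2 ≤ g) (hh : h = g - 1)
    (K : Matrix (Fin h) (Fin h) ℤ)
    (hK : ∀ i j : Fin h, K i j = if (i : ℕ) + (j : ℕ) = h - 1 then 1 else 0)
    (S C J T : Matrix ((Fin 1 ⊕ Fin h) ⊕ (Fin 1 ⊕ Fin h))
      ((Fin 1 ⊕ Fin h) ⊕ (Fin 1 ⊕ Fin h)) ℤ)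
    (hS : S = Matrix.fromBlocks
      (Matrix.fromBlocks 1 0 0 0) (Matrix.fromBlocks 0 0 0 K)
      (Matrix.fromBlocks 0 0 0 K) (Matrix.fromBlocks (-1) 0 0 0))
    (hC : C = Matrix.fromBlocks
      (Matrix.fromBlocks 1 0 0 (-1)) (Matrix.fromBlocks 0 0 0 (1 + K))
      (Matrix.fromBlocks 0 0 0 (-K)) (Matrix.fromBlocks 1 0 0 K))
    (hJ : J = Matrix.fromBlocks 0 (-1) 1 0)
    (hT : T = Matrix.fromBlocks 1 (Matrix.fromBlocks 0 0 0 (-2 - K)) 0 (-1)) :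
    C.transpose * J * C = J ∧ S * C = C * T := by
  have hKK : K * K = 1 := antidiag_sq h K hK
  have hKT : K.transpose = K := by
    ext i j
    rw [Matrix.transpose_apply, hK, hK, Nat.add_comm]
  subst hS hC hJ hT
  have e1 : K * (1 + K) = 1 + K := by rw [mul_add, hKK, mul_one, add_comm]
  have e2 : (1 + K) * K = 1 + K := by rw [add_mul, hKK, one_mul, add_comm]
  have e3 : K * (-2 - K) = -(1 + K) - K := by
    simp only [mul_sub, hKK, mul_neg, mul_two]; abel
  have z1 : K + -K = (0 : Matrix (Fin h) (Fin h) ℤ) := by abel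
  have z2 : -K + -1 + K = (-1 : Matrix (Fin h) (Fin h) ℤ) := by abel
  have z3 : -K + (1 + K) = (1 : Matrix (Fin h) (Fin h) ℤ) := by abel
  have z4 : 1 + K + -(1 + K) = (0 : Matrix (Fin h) (Fin h) ℤ) := by abel
  have z5 : 2 - -K + -(1 + K) = (1 : Matrix (Fin h) (Fin h) ℤ) := by
    rw [show (2 : Matrix (Fin h) (Fin h) ℤ) = 1 + 1 from one_add_one_eq_two.symm]; abel
  have z6 : K * 2 - -1 + -K = (1 + K : Matrix (Fin h) (Fin h) ℤ) := by
    rw [mul_two]; abel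
  have hn : Matrix.fromBlocks (-1 : Matrix (Fin 1) (Fin 1) ℤ) 0 0
      (-1 : Matrix (Fin h) (Fin h) ℤ) = -1 := by
    rw [show (Matrix.fromBlocks (-1 : Matrix (Fin 1) (Fin 1) ℤ) 0 0
      (-1 : Matrix (Fin h) (Fin h) ℤ)) = -(Matrix.fromBlocks 1 0 0 1) from by
        (rw [Matrix.fromBlocks_neg]; simp), Matrix.fromBlocks_one]
  constructor
  · simp only [Matrix.fromBlocks_transpose, Matrix.fromBlocks_multiply, hKT, hKK, e1, e2,
      Matrix.transpose_neg, Matrix.transpose_add, Matrix.transpose_one, Matrix.transpose_zero,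
      mul_add, add_mul, sub_mul, mul_sub, neg_mul, mul_neg, Matrix.mul_zero, Matrix.zero_mul,
      Matrix.mul_one, Matrix.one_mul, add_zero, zero_add, neg_neg, neg_zero,
      Matrix.fromBlocks_add, Matrix.fromBlocks_neg, Matrix.mul_neg, Matrix.neg_mul]
    simp only [z1, z2, z3, z4, Matrix.fromBlocks_zero, hn, Matrix.fromBlocks_one]
  · simp only [Matrix.fromBlocks_multiply, hKK, e1, e2, e3, mul_add, add_mul, sub_mul, mul_sub,
      neg_mul, mul_neg, Matrix.mul_zero, Matrix.zero_mul, Matrix.mul_one, Matrix.one_mul,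
      add_zero, zero_add, neg_neg, neg_zero, Matrix.fromBlocks_add, Matrix.fromBlocks_neg,
      Matrix.mul_neg, Matrix.neg_mul]
    simp only [z5, z6]
end

section
/- Let g ≥ 1, let K be the g×g real matrix with 1's on the anti-diagonal and 0 elsewhere, and let P be a g×g complex matrix such that Re P = -I - (1/2)K and Im P is invertible. Then for z ∈ ℂ^g the following are equivalent: (i) there exist integer vectors n, m ∈ ℤ^g such that conj(z) = z + n + P·m; (ii) there exist x ∈ ℝ^g and y ∈ ℤ^g such that z = x + P·y. (Here conj is applied entrywise, and real/integer vectors are regarded as complex vectors.) -/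
open Matrix Finset

/-- Even genus fixed-point computation: if `Re P = -I - (1/2)K` with `K` the
anti-diagonal matrix of `1`'s and `Im P` invertible, then `z ∈ ℂ^g` satisfies
`conj z = z + n + P·m` for some integer vectors `n, m` if and only if
`z = x + P·y` for some `x ∈ ℝ^g`, `y ∈ ℤ^g`. -/
theorem fixed_points_even_genus (g : ℕ) (hg : 1 ≤ g)
    (K : Matrix (Fin g) (Fin g) ℝ)
    (hK : ∀ i j : Fin g, K i j = if (i : ℕ) + (j : ℕ) = g - 1 then 1 else 0)
    (P : Matrix (Fin g) (Fin g) ℂ)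
    (hRe : P.map Complex.re = -1 - (1 / 2 : ℝ) • K)
    (hIm : IsUnit (P.map Complex.im)) :
    ∀ z : Fin g → ℂ,
      (∃ n m : Fin g → ℤ,
        (fun i => (starRingEnd ℂ) (z i)) =
          z + (fun i => ((n i : ℂ))) + P.mulVec (fun i => ((m i : ℂ)))) ↔
      (∃ (x : Fin g → ℝ) (y : Fin g → ℤ),
        z = (fun i => ((x i : ℂ))) + P.mulVec (fun i => ((y i : ℂ)))) := by
  intro z
  set A := P.map Complex.re with hA
  set B := P.map Complex.im with hB
  have hre : ∀ (w : Fin g → ℝ) (i : Fin g),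
      (P.mulVec (fun j => (w j : ℂ)) i).re = A.mulVec w i := by
    intro w i
    simp [Matrix.mulVec, dotProduct, Complex.re_sum, Complex.mul_re, hA, Matrix.map_apply]
  have him : ∀ (w : Fin g → ℝ) (i : Fin g),
      (P.mulVec (fun j => (w j : ℂ)) i).im = B.mulVec w i := by
    intro w i
    simp [Matrix.mulVec, dotProduct, Complex.im_sum, Complex.mul_im, hB, Matrix.map_apply]
  have hKmul : ∀ (w : Fin g → ℝ) (i : Fin g), K.mulVec w i = w i.rev := by
    intro w i
    have hK' : ∀ j : Fin g, K i j = if j = i.rev then 1 else 0 := by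
      intro j
      rw [hK]
      congr 1
      simp only [eq_iff_iff]
      constructor
      · intro h; ext; simp [Fin.val_rev]; omega
      · intro h; subst h; simp [Fin.val_rev]; omega
    simp [Matrix.mulVec, dotProduct, hK', ite_mul]
  have hAmul : ∀ (w : Fin g → ℝ) (i : Fin g),
      A.mulVec w i = -(w i) - (1/2) * w i.rev := by
    intro w i
    rw [hRe, Matrix.sub_mulVec, Matrix.smul_mulVec]
    simp [Matrix.neg_mulVec, hKmul w i]
  have hlin : ∀ (M : Matrix (Fin g) (Fin g) ℝ) (c : ℝ) (v : Fin g → ℝ) (i : Fin g),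
      M.mulVec (fun j => c * v j) i = c * M.mulVec v i := by
    intro M c v i
    simp only [Matrix.mulVec, dotProduct, Finset.mul_sum]
    exact Finset.sum_congr rfl fun j _ => by ring
  constructor
  · rintro ⟨n, m, h⟩
    have hcast : (fun i => ((m i : ℤ) : ℂ)) = (fun j => (((m j : ℝ)) : ℂ)) := by
      funext i; push_cast; ring
    rw [hcast] at h
    have hRe' : ∀ i, (0:ℝ) = n i + A.mulVec (fun j => (m j : ℝ)) i := by
      intro i
      have h1 := congrArg Complex.re (congrFun h i)
      simp only [Pi.add_apply, Complex.add_re, Complex.conj_re, Complex.intCast_re, hre] at h1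
      linarith
    have hIm' : ∀ i, -(z i).im = (z i).im + B.mulVec (fun j => (m j : ℝ)) i := by
      intro i
      have h1 := congrArg Complex.im (congrFun h i)
      simpa only [Pi.add_apply, Complex.add_im, Complex.conj_im, Complex.intCast_im, him,
        add_zero] using h1
    have hmint : ∀ i : Fin g, m i.rev = 2 * n i - 2 * m i := by
      intro i
      have h1 := hRe' i
      rw [hAmul] at h1
      have : ((m i.rev : ℝ)) = 2 * n i - 2 * m i := by linarith
      exact_mod_cast this
    set y : Fin g → ℤ := fun j => m j.rev - n j.rev with hy
    set yR : Fin g → ℝ := fun j => (y j : ℝ) with hyR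
    have hm2 : ∀ j : Fin g, (m j : ℝ) = -2 * yR j := by
      intro j
      have h1 := hmint j.rev
      rw [Fin.rev_rev] at h1
      have h2 : (m j : ℝ) = 2 * n j.rev - 2 * m j.rev := by exact_mod_cast h1
      simp only [hyR, hy]
      push_cast
      linarith
    refine ⟨fun i => (z i).re - A.mulVec yR i, y, ?_⟩
    have hycast : (fun i => ((y i : ℤ) : ℂ)) = (fun j => ((yR j : ℝ) : ℂ)) := by
      funext i; simp [hyR]
    rw [hycast]
    funext i
    apply Complex.ext
    · simp [Complex.add_re, hre]
    · simp only [Pi.add_apply, Complex.add_im, Complex.ofReal_im, him]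
      have h1 := hIm' i
      have h2 : B.mulVec (fun j => (m j : ℝ)) i = -2 * B.mulVec yR i := by
        rw [← hlin]
        congr 1
        funext j
        exact hm2 j
      rw [h2] at h1
      linarith
  · rintro ⟨x, y, h⟩
    have hycast : (fun i => ((y i : ℤ) : ℂ)) = (fun j => (((y j : ℝ)) : ℂ)) := by
      funext i; push_cast; ring
    rw [hycast] at h
    have hzim : ∀ i, (z i).im = B.mulVec (fun j => ((y j : ℤ) : ℝ)) i := by
      intro i
      have h1 := congrArg Complex.im (congrFun h i)
      simpa only [Pi.add_apply, Complex.add_im, Complex.ofReal_im, him, zero_add] using h1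
    refine ⟨fun i => -2 * y i - y i.rev, fun i => -2 * y i, ?_⟩
    set mR : Fin g → ℝ := fun j => -2 * (y j : ℝ) with hmR
    have hmcast : (fun i => (((fun i => -2 * y i : Fin g → ℤ) i : ℤ) : ℂ))
        = (fun j => ((mR j : ℝ) : ℂ)) := by
      funext i; simp [hmR]
    rw [hmcast]
    have hBm : ∀ i, B.mulVec mR i = -2 * B.mulVec (fun j => ((y j : ℤ) : ℝ)) i := by
      intro i
      rw [← hlin]
    funext i
    apply Complex.ext
    · simp only [Pi.add_apply, Complex.add_re, Complex.intCast_re, Complex.conj_re, hre, hAmul]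
      simp only [hmR]
      push_cast
      ring
    · simp only [Pi.add_apply, Complex.add_im, Complex.intCast_im, Complex.conj_im, him, hBm]
      rw [← hzim i]
      ring
end

section
/- Let g ≥ 1, and let A be the g×g real matrix with A(i,j) = 0 whenever i = 0 or j = 0, and whose remaining (g-1)×(g-1) block equals -2I - K (K being the (g-1)×(g-1) anti-diagonal matrix of 1's). Let P be a g×g complex matrix with Re P = (1/2)A and Im P invertible. Then for z ∈ ℂ^g the following are equivalent: (i) there exist integer vectors n, m ∈ ℤ^g such that conj(z) = z + n + P·m; (ii) there exist x ∈ ℝ^g and y ∈ ℤ^g such that either z = x + P·y, or z = x + P·y + (1/2)·p₁, where p₁ ∈ ℂ^g is the first column of P. (Here conj is applied entrywise, and real/integer vectors are regarded as complex vectors.) -/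
/-- Odd genus fixed-point computation: let `A` be the `g×g` real matrix which is
`0` on the first row and column and whose remaining `(g-1)×(g-1)` block is
`-2I - K` (`K` the anti-diagonal matrix of `1`'s), and let `P` be a complex
matrix with `Re P = (1/2)A` and `Im P` invertible. Then `z ∈ ℂ^g` satisfies
`conj z = z + n + P·m` for some integer vectors `n, m` if and only if
`z = x + P·y` or `z = x + P·y + (1/2)p₁` for some `x ∈ ℝ^g`, `y ∈ ℤ^g`,
where `p₁` is the first column of `P`. -/
theorem fixed_points_odd_genus (g : ℕ) (hg : 1 ≤ g)
    (A : Matrix (Fin g) (Fin g) ℝ)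
    (hA : ∀ i j : Fin g, A i j =
      if (i : ℕ) = 0 ∨ (j : ℕ) = 0 then 0
      else (if i = j then -2 else 0) + (if (i : ℕ) + (j : ℕ) = g then -1 else 0))
    (P : Matrix (Fin g) (Fin g) ℂ)
    (hRe : P.map Complex.re = (1 / 2 : ℝ) • A)
    (hIm : IsUnit (P.map Complex.im)) :
    ∀ z : Fin g → ℂ,
      (∃ n m : Fin g → ℤ,
        (fun i => (starRingEnd ℂ) (z i)) =
          z + (fun i => ((n i : ℂ))) + P.mulVec (fun i => ((m i : ℂ)))) ↔
      (∃ (x : Fin g → ℝ) (y : Fin g → ℤ),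
        z = (fun i => ((x i : ℂ))) + P.mulVec (fun i => ((y i : ℂ))) ∨
        z = (fun i => ((x i : ℂ))) + P.mulVec (fun i => ((y i : ℂ)))
              + (1 / 2 : ℂ) • (fun i => P i ⟨0, hg⟩)) := by
  intro z
  set z0 : Fin g := ⟨0, hg⟩ with hz0
  have hre' : ∀ i j, (P i j).re = (1/2) * A i j := by
    intro i j
    have := congrFun (congrFun hRe i) j
    simpa [Matrix.map_apply, Matrix.smul_apply, smul_eq_mul] using this
  have hconjP : ∀ i j, (starRingEnd ℂ) (P i j) = ((A i j : ℝ) : ℂ) - P i j := by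
    intro i j
    have h1 := Complex.add_conj (P i j)
    have h2 : (starRingEnd ℂ) (P i j) = 2 * ((P i j).re : ℂ) - P i j := by
      push_cast at h1; linear_combination h1
    rw [h2, hre' i j]; push_cast; ring
  set Aint : Fin g → Fin g → ℤ := fun i j =>
    if (i : ℕ) = 0 ∨ (j : ℕ) = 0 then 0
    else (if i = j then -2 else 0) + (if (i : ℕ) + (j : ℕ) = g then -1 else 0)
    with hAint
  have hAcast : ∀ i j, ((Aint i j : ℤ) : ℝ) = A i j := by
    intro i j; rw [hA]
    by_cases h1 : (i : ℕ) = 0 ∨ (j : ℕ) = 0 <;> by_cases h2 : i = j <;>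
      by_cases h3 : (i : ℕ) + (j : ℕ) = g <;> simp [hAint, h1, h2, h3]
  constructor
  · rintro ⟨n, m, h⟩
    have hcomp : ∀ i, (starRingEnd ℂ) (z i)
        = z i + (n i : ℂ) + ∑ j, P i j * (m j : ℂ) := by
      intro i
      have := congrFun h i
      simpa [Matrix.mulVec, dotProduct, Pi.add_apply] using this
    -- imaginary parts
    have hIm2 : ∀ i, (∑ j, (P i j).im * (m j : ℝ)) = -2 * (z i).im := by
      intro i
      have h1 := congrArg Complex.im (hcomp i)
      simp only [Complex.conj_im, Complex.add_im, Complex.intCast_im,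
        Complex.im_sum, Complex.mul_im, Complex.intCast_re, mul_zero,
        zero_mul, add_zero, zero_add] at h1
      have h2 : ∀ j, (P i j).re * ((m j : ℂ)).im + (P i j).im * ((m j : ℂ)).re
          = (P i j).im * (m j : ℝ) := by
        intro j; simp
      linarith [h1]
    -- real parts and integrality
    have hsum : ∀ i, ∑ j, Aint i j * m j = -2 * n i := by
      intro i
      have h1 := congrArg Complex.re (hcomp i)
      simp only [Complex.conj_re, Complex.add_re, Complex.intCast_re,
        Complex.re_sum, Complex.mul_re, Complex.intCast_im, mul_zero,
        sub_zero] at h1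
      have h2 : ∑ j, (P i j).re * ((m j : ℤ) : ℝ)
          = (1/2) * ∑ j, ((Aint i j : ℝ)) * (m j : ℝ) := by
        rw [Finset.mul_sum]
        refine Finset.sum_congr rfl fun j _ => ?_
        rw [hre' i j, ← hAcast i j]
        ring
      rw [h2] at h1
      have h3 : (((∑ j, Aint i j * m j : ℤ)) : ℝ) = ((-2 * n i : ℤ) : ℝ) := by
        push_cast
        linarith [h1]
      exact_mod_cast h3
    -- parity of m j for j ≠ 0
    have hpar : ∀ j : Fin g, (j : ℕ) ≠ 0 → 2 ∣ m j := by
      intro j hj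
      have hjlt : (j : ℕ) < g := j.isLt
      set i : Fin g := ⟨g - (j : ℕ), by omega⟩ with hi_def
      have hival : (i : ℕ) = g - (j : ℕ) := rfl
      have hi : (i : ℕ) ≠ 0 := by omega
      have hij : (i : ℕ) + (j : ℕ) = g := by omega
      have step : ∀ j' : Fin g, Aint i j' * m j' =
          (if i = j' then -2 * m j' else 0)
            + (if (i : ℕ) + (j' : ℕ) = g then -(m j') else 0) := by
        intro j'
        by_cases h0 : (j' : ℕ) = 0
        · have h1 : ¬ i = j' := by
            intro e; rw [e] at hi; exact hi h0
          have h2 : (i : ℕ) + (j' : ℕ) ≠ g := by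
            have : (i : ℕ) < g := i.isLt
            omega
          simp only [hAint]
          rw [if_pos (Or.inr h0), if_neg h1, if_neg h2]
          ring
        · simp only [hAint, hi, h0, or_self, if_false]
          split_ifs <;> ring
      have hval : ∑ j', Aint i j' * m j' = -2 * m i + -(m j) := by
        rw [Finset.sum_congr rfl fun j' _ => step j', Finset.sum_add_distrib]
        congr 1
        · simp
        · have hcong : ∀ j' : Fin g,
              (if (i : ℕ) + (j' : ℕ) = g then -(m j') else 0)
                = (if j' = j then -(m j') else 0) := by
            intro j'
            have : ((i : ℕ) + (j' : ℕ) = g) ↔ (j' = j) := by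
              constructor
              · intro h'; exact Fin.ext (by omega)
              · intro h'; subst h'; exact hij
            rw [if_congr this rfl rfl]
          rw [Finset.sum_congr rfl fun j' _ => hcong j']
          simp
      have := hsum i
      rw [hval] at this
      exact ⟨n i - m i, by linarith⟩
    -- imaginary part of target
    have hSim : ∀ i, (∑ j, P i j * (-(m j : ℂ)/2)).im = (z i).im := by
      intro i
      rw [Complex.im_sum]
      have h1 : ∀ j, (P i j * (-(m j : ℂ)/2)).im
          = (P i j).im * (m j : ℝ) * (-(1/2)) := by
        intro j
        have : (-(m j : ℂ)/2) = ((-(m j : ℝ)/2 : ℝ) : ℂ) := by push_cast; ring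
        rw [this, Complex.mul_im]
        simp; ring
      rw [Finset.sum_congr rfl fun j _ => h1 j, ← Finset.sum_mul, hIm2 i]
      ring
    by_cases hm0 : 2 ∣ m z0
    · -- all even
      have hdvd : ∀ j, 2 ∣ m j := by
        intro j
        by_cases h0 : (j : ℕ) = 0
        · have : j = z0 := Fin.ext (by simpa [hz0] using h0)
          rwa [this]
        · exact hpar j h0
      set y : Fin g → ℤ := fun j => -(m j / 2) with hy_def
      have hy : ∀ j, ((y j : ℤ) : ℂ) = -(m j : ℂ)/2 := by
        intro j
        obtain ⟨k, hk⟩ := hdvd j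
        have e2 : y j = -k := by simp only [hy_def]; omega
        have e3 : (m j : ℂ) = 2 * (k : ℂ) := by exact_mod_cast congrArg (Int.cast : ℤ → ℂ) hk
        rw [e2, e3]; push_cast; ring
      refine ⟨fun i => (z i - ∑ j, P i j * (-(m j : ℂ)/2)).re, y, Or.inl ?_⟩
      funext i
      have hmv : P.mulVec (fun j => ((y j : ℤ) : ℂ)) i
          = ∑ j, P i j * (-(m j : ℂ)/2) := by
        simp only [Matrix.mulVec, dotProduct, hy]
      simp only [Pi.add_apply, hmv]
      apply Complex.ext
      · simp
      · simp [hSim i]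
    · -- m z0 odd
      set y : Fin g → ℤ := fun j => if j = z0 then -((m j + 1) / 2) else -(m j / 2)
        with hy_def
      have hy : ∀ j, ((y j : ℤ) : ℂ) + (if j = z0 then (1/2 : ℂ) else 0)
          = -(m j : ℂ)/2 := by
        intro j
        by_cases h0 : j = z0
        · have hodd : ¬ 2 ∣ m j := by rwa [h0]
          obtain ⟨k, hk⟩ : ∃ k, m j + 1 = 2 * k := by
            rcases Int.even_or_odd (m j + 1) with ⟨k, hk⟩ | ⟨k, hk⟩
            · exact ⟨k, by omega⟩
            · exact absurd ⟨k + 1, by omega⟩ hodd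
          have e2 : y j = -k := by simp only [hy_def, if_pos h0]; omega
          have e3 : (m j : ℂ) = 2 * (k : ℂ) - 1 := by
            have : m j = 2 * k - 1 := by omega
            exact_mod_cast congrArg (Int.cast : ℤ → ℂ) this
          rw [if_pos h0, e2, e3]; push_cast; ring
        · have hne : (j : ℕ) ≠ 0 := by
            intro hc; exact h0 (Fin.ext (by simpa [hz0] using hc))
          obtain ⟨k, hk⟩ := hpar j hne
          have e2 : y j = -k := by simp only [hy_def, if_neg h0]; omega
          have e3 : (m j : ℂ) = 2 * (k : ℂ) := by exact_mod_cast congrArg (Int.cast : ℤ → ℂ) hk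
          rw [if_neg h0, e2, e3]; push_cast; ring
      refine ⟨fun i => (z i - ∑ j, P i j * (-(m j : ℂ)/2)).re, y, Or.inr ?_⟩
      funext i
      have hsplit : ∑ j, P i j * (-(m j : ℂ)/2)
          = P.mulVec (fun j => ((y j : ℤ) : ℂ)) i + (1/2 : ℂ) * P i z0 := by
        simp only [Matrix.mulVec, dotProduct]
        have h1 : ∀ j, P i j * (-(m j : ℂ)/2)
            = P i j * ((y j : ℤ) : ℂ) + (if j = z0 then P i j * (1/2 : ℂ) else 0) := by
          intro j
          rw [← hy j]
          by_cases h0 : j = z0 <;> simp [h0] <;> ring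
        rw [Finset.sum_congr rfl fun j _ => h1 j, Finset.sum_add_distrib]
        congr 1
        simp [mul_comm]
      have hR : ((fun i => ((z i - ∑ j, P i j * (-(m j : ℂ)/2)).re : ℂ))
            + P.mulVec (fun j => ((y j : ℤ) : ℂ))
            + (1/2 : ℂ) • (fun i => P i z0)) i
          = ((z i - ∑ j, P i j * (-(m j : ℂ)/2)).re : ℂ)
            + ∑ j, P i j * (-(m j : ℂ)/2) := by
        simp only [Pi.add_apply, Pi.smul_apply, smul_eq_mul]
        rw [add_assoc, ← hsplit]
      rw [hR]
      apply Complex.ext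
      · simp
      · simp [hSim i]
  · rintro ⟨x, y, hc | hc⟩
    · refine ⟨fun i => ∑ j, Aint i j * y j, fun j => -2 * y j, ?_⟩
      funext i
      have hz : z i = (x i : ℂ) + ∑ j, P i j * ((y j : ℤ) : ℂ) := by
        rw [hc]; simp [Matrix.mulVec, dotProduct]
      simp only [Pi.add_apply, Matrix.mulVec, dotProduct, hz]
      rw [map_add, map_sum, Complex.conj_ofReal]
      have h1 : ∀ j, (starRingEnd ℂ) (P i j * ((y j : ℤ) : ℂ))
          = ((A i j : ℝ) : ℂ) * ((y j : ℤ) : ℂ) - P i j * ((y j : ℤ) : ℂ) := by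
        intro j
        rw [map_mul, hconjP i j, map_intCast]; ring
      rw [Finset.sum_congr rfl fun j _ => h1 j]
      have h2 : ((∑ j, Aint i j * y j : ℤ) : ℂ)
          = ∑ j, ((A i j : ℝ) : ℂ) * ((y j : ℤ) : ℂ) := by
        push_cast
        refine Finset.sum_congr rfl fun j _ => ?_
        rw [show ((Aint i j : ℤ) : ℂ) = (((Aint i j : ℤ) : ℝ) : ℂ) from by push_cast; rfl,
          hAcast i j]
      rw [Finset.sum_sub_distrib, h2]
      have h3 : ∑ j, P i j * ((-2 * y j : ℤ) : ℂ) = -2 * ∑ j, P i j * ((y j : ℤ) : ℂ) := by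
        rw [Finset.mul_sum]
        refine Finset.sum_congr rfl fun j _ => ?_
        push_cast; ring
      rw [h3]; ring
    · refine ⟨fun i => ∑ j, Aint i j * y j,
        fun j => if j = z0 then -2 * y j - 1 else -2 * y j, ?_⟩
      funext i
      have hz : z i = (x i : ℂ) + ∑ j, P i j * ((y j : ℤ) : ℂ) + (1/2 : ℂ) * P i z0 := by
        rw [hc]; simp [Matrix.mulVec, dotProduct]
      simp only [Pi.add_apply, Matrix.mulVec, dotProduct, hz]
      have hA0 : A i z0 = 0 := by rw [hA]; simp [hz0]
      have hcz : (starRingEnd ℂ) ((1/2 : ℂ) * P i z0) = -(1/2 : ℂ) * P i z0 := by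
        have c1 : (starRingEnd ℂ) ((1/2 : ℂ)) = 1/2 := by
          rw [show (1/2 : ℂ) = ((1/2 : ℝ) : ℂ) by norm_num, Complex.conj_ofReal]
        rw [map_mul, hconjP i z0, hA0, c1]
        push_cast; ring
      rw [map_add, map_add, Complex.conj_ofReal, map_sum, hcz]
      have h1 : ∀ j, (starRingEnd ℂ) (P i j * ((y j : ℤ) : ℂ))
          = ((A i j : ℝ) : ℂ) * ((y j : ℤ) : ℂ) - P i j * ((y j : ℤ) : ℂ) := by
        intro j
        rw [map_mul, hconjP i j, map_intCast]; ring
      rw [Finset.sum_congr rfl fun j _ => h1 j]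
      have h2 : ((∑ j, Aint i j * y j : ℤ) : ℂ)
          = ∑ j, ((A i j : ℝ) : ℂ) * ((y j : ℤ) : ℂ) := by
        push_cast
        refine Finset.sum_congr rfl fun j _ => ?_
        rw [show ((Aint i j : ℤ) : ℂ) = (((Aint i j : ℤ) : ℝ) : ℂ) from by push_cast; rfl,
          hAcast i j]
      have h3 : ∑ j, P i j * (((if j = z0 then -2 * y j - 1 else -2 * y j : ℤ)) : ℂ)
          = -2 * (∑ j, P i j * ((y j : ℤ) : ℂ)) - P i z0 := by
        have hterm : ∀ j, P i j * (((if j = z0 then -2 * y j - 1 else -2 * y j : ℤ)) : ℂ)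
            = -2 * (P i j * ((y j : ℤ) : ℂ)) + (if j = z0 then -(P i j) else 0) := by
          intro j
          by_cases h0 : j = z0 <;> simp [h0] <;> push_cast <;> ring
        rw [Finset.sum_congr rfl fun j _ => hterm j, Finset.sum_add_distrib,
          ← Finset.mul_sum]
        simp
        ring
      rw [Finset.sum_sub_distrib, h2, h3]
      ring
end
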